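/- arXiv:2412.04231 — 2 statements merged into one kernel-verified Lean document; each statement's English description precedes it below -/
import Mathlib

section
/- Let $V$ be a finite-dimensional inner product space, $A : V \to V$ a positive self-adjoint linear operator, and $\tau > 0$. For $g_0, \ldots, g_{J-1} \in V$ define $Z_0 = 0$ and $Z_{j+1} = (I + \tau A)^{-1}(Z_j + \tau g_j)$ for $0 \le j < J$. Then for every $1 \le m \le J$, $\|Z_m\|^2 + \tau \sum_{j=1}^{m} \langle A Z_j, Z_j \rangle \le \tau \sum_{j=0}^{m-1} \langle A^{-1} g_j, g_j\rangle$. -/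
/-- Energy stability of the implicit Euler scheme (Lemma 5.2, case `α = 1`, `p = 2`):
if `A` is positive self-adjoint on a finite-dimensional inner product space, `Z 0 = 0`
and `Z_{j+1} + τ A Z_{j+1} = Z_j + τ g_j`, then for `1 ≤ m ≤ J`,
`‖Z_m‖² + τ ∑_{j=1}^m ⟨A Z_j, Z_j⟩ ≤ τ ∑_{j=0}^{m-1} ⟨A⁻¹ g_j, g_j⟩`
(here `ginv j = A⁻¹ g_j`). -/
theorem implicit_euler_energy {V : Type*} [NormedAddCommGroup V]
    [InnerProductSpace ℝ V] [FiniteDimensional ℝ V]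
    (A : V →ₗ[ℝ] V)
    (hsym : ∀ x y : V, (inner ℝ (A x) y : ℝ) = inner ℝ x (A y))
    (hpos : ∀ x : V, x ≠ 0 → (0 : ℝ) < inner ℝ (A x) x)
    (τ : ℝ) (hτ : 0 < τ) (J : ℕ) (g Z ginv : ℕ → V)
    (hZ0 : Z 0 = 0)
    (hrec : ∀ j < J, Z (j + 1) + τ • A (Z (j + 1)) = Z j + τ • g j)
    (hginv : ∀ j, A (ginv j) = g j) :
    ∀ m, 1 ≤ m → m ≤ J →
      ‖Z m‖ ^ 2 + τ * ∑ j ∈ Finset.Icc 1 m, (inner ℝ (A (Z j)) (Z j) : ℝ)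
        ≤ τ * ∑ j ∈ Finset.range m, (inner ℝ (ginv j) (g j) : ℝ) := by
  have hnn : ∀ x : V, (0 : ℝ) ≤ inner ℝ (A x) x := by
    intro x
    rcases eq_or_ne x 0 with h | h
    · simp [h]
    · exact (hpos x h).le
  -- Cauchy-Schwarz in the A-inner product
  have hcs : ∀ j (z : V), 2 * (inner ℝ (g j) z : ℝ) ≤
      (inner ℝ (ginv j) (g j) : ℝ) + (inner ℝ (A z) z : ℝ) := by
    intro j z
    have h0 := hnn (ginv j - z)
    have hexp : (inner ℝ (A (ginv j - z)) (ginv j - z) : ℝ)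
        = (inner ℝ (ginv j) (g j) : ℝ) - 2 * (inner ℝ (g j) z : ℝ)
          + (inner ℝ (A z) z : ℝ) := by
      rw [map_sub, inner_sub_left, inner_sub_right, inner_sub_right, hginv]
      have h1 : (inner ℝ (g j) (ginv j) : ℝ) = inner ℝ (ginv j) (g j) :=
        real_inner_comm _ _
      have h2 : (inner ℝ (A z) (ginv j) : ℝ) = inner ℝ (g j) z := by
        rw [hsym, hginv, real_inner_comm]
      rw [h1, h2]
      ring
    linarith [hexp ▸ h0]
  -- one-step estimate
  have hstep : ∀ j < J, ‖Z (j + 1)‖ ^ 2 + τ * (inner ℝ (A (Z (j + 1))) (Z (j + 1)) : ℝ)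
      ≤ ‖Z j‖ ^ 2 + τ * (inner ℝ (ginv j) (g j) : ℝ) := by
    intro j hj
    have heq := hrec j hj
    have htest : (inner ℝ (Z (j+1) + τ • A (Z (j+1))) (Z (j+1)) : ℝ)
        = inner ℝ (Z j + τ • g j) (Z (j+1)) := by rw [heq]
    rw [inner_add_left, inner_add_left, real_inner_smul_left,
      real_inner_smul_left, real_inner_self_eq_norm_sq] at htest
    have h2 : 2 * (inner ℝ (Z j) (Z (j+1)) : ℝ) ≤ ‖Z j‖ ^ 2 + ‖Z (j+1)‖ ^ 2 := by
      have := sq_nonneg ‖Z j - Z (j+1)‖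
      rw [@norm_sub_sq_real] at this
      linarith
    have h3 := hcs j (Z (j+1))
    nlinarith [hτ]
  -- induction
  intro m hm1 hmJ
  clear hm1
  induction m with
  | zero => simp [hZ0]
  | succ n ih =>
    have hn : n < J := hmJ
    rcases Nat.eq_zero_or_pos n with h0 | h0
    · subst h0
      have := hstep 0 hn
      simp only [hZ0, norm_zero] at this
      simpa [Finset.sum_range_one] using this
    · rw [Finset.sum_Icc_succ_top (by omega : 1 ≤ n+1), Finset.sum_range_succ]
      have hihn := ih (le_of_lt hn)
      have := hstep n hn
      nlinarith [hτ]
end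

section
/- Let $V$ be a finite-dimensional inner product space and $A : V \to V$ positive self-adjoint with smallest eigenvalue $\lambda_0 > 0$. Let $g : [0,T] \to V$ be bounded measurable and define $w(t) = \int_0^t e^{-(t-s)A} g(s)\, ds$. Then for any $\theta \in (0,1)$ and $0 \le s \le t \le T$, $\|A^{\theta/2}\big(w(t) - w(s)\big)\| \le c\, (t-s)^{1 - \theta/2} \sup_{r\in[0,T]}\|g(r)\|$, with $c$ depending only on $\theta$ and $T$. -/
open Real intervalIntegral

/-- The diagonal operator on `EuclideanSpace ℝ (Fin n)` with diagonal entries `f i`. -/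
noncomputable def diagOp {n : ℕ} (f : Fin n → ℝ) :
    EuclideanSpace ℝ (Fin n) →L[ℝ] EuclideanSpace ℝ (Fin n) :=
  LinearMap.toContinuousLinearMap
    { toFun := fun x => (WithLp.toLp 2 (fun i => f i * x i) : EuclideanSpace ℝ (Fin n))
      map_add' := by
        intro x y; ext i
        show f i * (x i + y i) = f i * x i + f i * y i
        ring
      map_smul' := by
        intro c x; ext i
        show f i * (c * x i) = c * (f i * x i)
        ring }

section Aux

open MeasureTheory

lemma diagOp_apply {n : ℕ} (f : Fin n → ℝ) (x : EuclideanSpace ℝ (Fin n)) (i : Fin n) :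
    diagOp f x i = f i * x i := rfl

lemma diagOp_comp {n : ℕ} (f h : Fin n → ℝ) (x : EuclideanSpace ℝ (Fin n)) :
    diagOp f (diagOp h x) = diagOp (fun i => f i * h i) x := by
  ext i
  show f i * (h i * x i) = f i * h i * x i
  ring

lemma diagOp_sub {n : ℕ} (f h : Fin n → ℝ) (x : EuclideanSpace ℝ (Fin n)) :
    diagOp f x - diagOp h x = diagOp (fun i => f i - h i) x := by
  ext i
  show f i * x i - h i * x i = (f i - h i) * x i
  ring

lemma diagOp_norm_le {n : ℕ} {f : Fin n → ℝ} {C : ℝ} (hC : 0 ≤ C) (h : ∀ i, |f i| ≤ C)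
    (x : EuclideanSpace ℝ (Fin n)) : ‖diagOp f x‖ ≤ C * ‖x‖ := by
  rw [EuclideanSpace.norm_eq, EuclideanSpace.norm_eq]
  rw [← Real.sqrt_sq hC, ← Real.sqrt_mul (sq_nonneg C)]
  apply Real.sqrt_le_sqrt
  rw [Finset.mul_sum]
  apply Finset.sum_le_sum
  intro i _
  rw [diagOp_apply]
  have h1 : ‖f i * x i‖ = |f i| * ‖x i‖ := by
    simp [abs_mul, Real.norm_eq_abs]
  rw [h1, mul_pow]
  have h2 : |f i| ^ 2 ≤ C ^ 2 := by
    have := h i; nlinarith [abs_nonneg (f i)]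
  nlinarith [sq_nonneg (‖x i‖), sq_nonneg (|f i|)]

lemma meas_diag {n : ℕ} (k : ℝ → Fin n → ℝ) (hk : ∀ i, Measurable fun r => k r i)
    (g : ℝ → EuclideanSpace ℝ (Fin n)) (hg : Measurable g) :
    Measurable fun r => diagOp (k r) (g r) := by
  have hgi : ∀ i, Measurable fun r => g r i := fun i =>
    (measurable_pi_iff.1 (((MeasurableEquiv.toLp 2 (Fin n → ℝ)).symm.measurable).comp hg)) i
  have : Measurable fun r =>
      ((MeasurableEquiv.toLp 2 (Fin n → ℝ)) fun i => k r i * g r i) :=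
    ((MeasurableEquiv.toLp 2 (Fin n → ℝ)).measurable).comp
      (measurable_pi_iff.2 fun i => (hk i).mul (hgi i))
  exact this

lemma intervalIntegrable_of_bound {E : Type*} [NormedAddCommGroup E] {F : ℝ → E} {a b M : ℝ}
    (hF : AEStronglyMeasurable F volume) (hab : a ≤ b)
    (h : ∀ r ∈ Set.Icc a b, ‖F r‖ ≤ M) : IntervalIntegrable F volume a b := by
  rw [intervalIntegrable_iff_integrableOn_Ioc_of_le hab]
  refine Integrable.mono' (integrable_const M) hF.restrict ?_
  filter_upwards [ae_restrict_mem measurableSet_Ioc] with r hr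
  exact h r ⟨hr.1.le, hr.2⟩

lemma rpow_mul_exp_neg_le_one {x b : ℝ} (hx : 0 ≤ x) (hb0 : 0 ≤ b) (hb1 : b ≤ 1) :
    x ^ b * Real.exp (-x) ≤ 1 := by
  have hxe : x ^ b ≤ Real.exp x := by
    rcases le_or_gt x 1 with h | h
    · exact (Real.rpow_le_one hx h hb0).trans (by linarith [Real.add_one_le_exp x])
    · have : x ^ b ≤ x ^ (1 : ℝ) := Real.rpow_le_rpow_of_exponent_le h.le hb1
      rw [Real.rpow_one] at this
      exact this.trans (by linarith [Real.add_one_le_exp x])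
  calc x ^ b * Real.exp (-x) ≤ Real.exp x * Real.exp (-x) :=
        mul_le_mul_of_nonneg_right hxe (Real.exp_nonneg _)
    _ = 1 := by rw [← Real.exp_add]; simp

lemma sq_mul_exp_neg_le_four {x : ℝ} (hx : 0 ≤ x) : x ^ 2 * Real.exp (-x) ≤ 4 := by
  have e2 : Real.exp (-x) = Real.exp (-(x/2)) * Real.exp (-(x/2)) := by
    rw [← Real.exp_add]; ring_nf
  have h1 : x/2 + 1 ≤ Real.exp (x/2) := Real.add_one_le_exp _
  have e1 : Real.exp (-(x/2)) * Real.exp (x/2) = 1 := by rw [← Real.exp_add]; simp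
  have hp : 0 < Real.exp (-(x/2)) := Real.exp_pos _
  have h3 : (x/2) * Real.exp (-(x/2)) ≤ 1 := by nlinarith
  have h4 : 0 ≤ (x/2) * Real.exp (-(x/2)) := by positivity
  nlinarith

lemma rpow_mul_exp_neg_le_five {x b : ℝ} (hx : 0 ≤ x) (hb0 : 0 ≤ b) (hb1 : b ≤ 1) :
    x ^ (1 + b) * Real.exp (-x) ≤ 5 := by
  have hxb : x ^ (1 + b) ≤ 1 + x ^ 2 := by
    rcases le_or_gt x 1 with h | h
    · have := Real.rpow_le_one hx h (by linarith : (0:ℝ) ≤ 1 + b)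
      nlinarith [sq_nonneg x]
    · have h2 : x ^ (1 + b) ≤ x ^ (2 : ℝ) :=
        Real.rpow_le_rpow_of_exponent_le h.le (by linarith)
      rw [show (2:ℝ) = ((2:ℕ):ℝ) by norm_num, Real.rpow_natCast] at h2
      nlinarith
  have h4 := sq_mul_exp_neg_le_four hx
  have he : 0 < Real.exp (-x) := Real.exp_pos _
  have : Real.exp (-x) ≤ 1 := Real.exp_le_one_iff.2 (by linarith)
  nlinarith

lemma diag_decay {μ τ γ C : ℝ} (hμ : 0 < μ) (hτ : 0 < τ)
    (h : (τ * μ) ^ γ * Real.exp (-(τ * μ)) ≤ C) :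
    μ ^ γ * Real.exp (-(τ * μ)) ≤ C * τ ^ (-γ) := by
  rw [Real.mul_rpow hτ.le hμ.le] at h
  have hτγ : (0:ℝ) < τ ^ γ := Real.rpow_pos_of_pos hτ _
  rw [Real.rpow_neg hτ.le]
  have h2 := mul_le_mul_of_nonneg_right h (inv_nonneg.2 hτγ.le)
  calc μ ^ γ * Real.exp (-(τ * μ)) = τ ^ γ * μ ^ γ * Real.exp (-(τ * μ)) * (τ ^ γ)⁻¹ := by
        field_simp
    _ ≤ C * (τ ^ γ)⁻¹ := h2

lemma one_sub_exp_le_rpow {y c : ℝ} (hy : 0 ≤ y) (hc0 : 0 ≤ c) (hc1 : c ≤ 1) :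
    1 - Real.exp (-y) ≤ y ^ c := by
  rcases le_or_gt 1 y with h | h
  · have : 1 - Real.exp (-y) ≤ 1 := by linarith [Real.exp_pos (-y)]
    exact this.trans (Real.one_le_rpow h hc0)
  · rcases eq_or_lt_of_le hy with h0 | h0
    · rw [← h0]
      simp only [neg_zero, Real.exp_zero, sub_self]
      exact Real.rpow_nonneg le_rfl c
    · have h1 : 1 - Real.exp (-y) ≤ y := by linarith [Real.add_one_le_exp (-y)]
      have h2 : y ^ (1:ℝ) ≤ y ^ c := Real.rpow_le_rpow_of_exponent_ge h0 h.le hc1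
      rw [Real.rpow_one] at h2
      linarith

lemma II_sub {γ c a b : ℝ} (hγ : -1 < γ) :
    IntervalIntegrable (fun r => (c - r) ^ γ) volume a b := by
  have := (intervalIntegral.intervalIntegrable_rpow' hγ (a := c - a) (b := c - b)).comp_sub_left c
  simpa using this

lemma II_sub2 {γ c a b : ℝ} (h : (0:ℝ) ∉ Set.uIcc (c - a) (c - b)) :
    IntervalIntegrable (fun r => (c - r) ^ γ) volume a b := by
  have := (intervalIntegral.intervalIntegrable_rpow (μ := volume) (r := γ)
    (a := c - a) (b := c - b) (Or.inr h)).comp_sub_left c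
  simpa using this

lemma J_int {γ c a b : ℝ} (hγ : -1 < γ) :
    ∫ r in a..b, (c - r) ^ γ = ((c - a) ^ (γ + 1) - (c - b) ^ (γ + 1)) / (γ + 1) := by
  rw [intervalIntegral.integral_comp_sub_left (fun x => x ^ γ) c]
  rw [integral_rpow (Or.inl hγ)]

lemma J_int2 {γ c a b : ℝ} (hγ : γ ≠ -1) (h : (0:ℝ) ∉ Set.uIcc (c - b) (c - a)) :
    ∫ r in a..b, (c - r) ^ γ = ((c - a) ^ (γ + 1) - (c - b) ^ (γ + 1)) / (γ + 1) := by
  rw [intervalIntegral.integral_comp_sub_left (fun x => x ^ γ) c]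
  rw [integral_rpow (Or.inr ⟨hγ, h⟩)]

lemma ae_ne_restrict (S : Set ℝ) (t : ℝ) :
    ∀ᵐ r ∂(volume.restrict S), r ≠ t := by
  refine ae_restrict_of_ae ?_
  rw [MeasureTheory.ae_iff]
  have : {a : ℝ | ¬ a ≠ t} = {t} := by ext a; simp
  rw [this]
  exact Real.volume_singleton

end Aux

set_option maxHeartbeats 2000000

/-- Hölder continuity of the deterministic convolution
`w(t) = ∫_0^t e^{-(t-s)A} g(s) ds` for a positive self-adjoint operator `A`
(diagonalized, eigenvalues `μ i ≥ λ0 > 0`) on a finite-dimensional inner product space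
and bounded measurable `g`: for `θ ∈ (0,1)` and `0 ≤ s ≤ t ≤ T`,
`‖A^{θ/2}(w(t) - w(s))‖ ≤ c (t-s)^{1-θ/2} sup_{[0,T]} ‖g‖`, with `c = c(θ, T)`. -/
theorem convolution_holder (θ T : ℝ) (hθ0 : 0 < θ) (hθ1 : θ < 1) (hT : 0 < T) :
    ∃ c > 0, ∀ (n : ℕ) (μ : Fin n → ℝ) (lam0 : ℝ), 0 < lam0 → (∀ i, lam0 ≤ μ i) →
      ∀ g : ℝ → EuclideanSpace ℝ (Fin n), Measurable g →
      ∀ M : ℝ, (∀ r ∈ Set.Icc (0 : ℝ) T, ‖g r‖ ≤ M) →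
      ∀ s t : ℝ, 0 ≤ s → s ≤ t → t ≤ T →
        ‖diagOp (fun i => μ i ^ (θ / 2))
            ((∫ r in (0 : ℝ)..t, diagOp (fun i => Real.exp (-(t - r) * μ i)) (g r)) -
             (∫ r in (0 : ℝ)..s, diagOp (fun i => Real.exp (-(s - r) * μ i)) (g r)))‖
          ≤ c * (t - s) ^ (1 - θ / 2) * M := by
  have hb0 : (0:ℝ) < θ / 2 := by linarith
  have hb1 : θ / 2 < 1 := by linarith
  have h1b : (0:ℝ) < 1 - θ / 2 := by linarith
  refine ⟨2 / (1 - θ/2) + 5 / (θ/2),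
    add_pos (div_pos two_pos h1b) (div_pos (by norm_num) hb0), ?_⟩
  intro n μ lam0 hlam0 hml g hg M hM s t hs0 hst htT
  have hμpos : ∀ i, 0 < μ i := fun i => lt_of_lt_of_le hlam0 (hml i)
  have hM0 : 0 ≤ M := le_trans (norm_nonneg _) (hM 0 ⟨le_rfl, hT.le⟩)
  rcases eq_or_lt_of_le hst with heq | hlt
  · rw [heq, sub_self, map_zero, norm_zero]
    have hcn : (0:ℝ) ≤ 2 / (1 - θ/2) + 5 / (θ/2) :=
      (add_pos (div_pos two_pos h1b) (div_pos (by norm_num) hb0)).le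
    exact mul_nonneg (mul_nonneg hcn (Real.rpow_nonneg (by simp) _)) hM0
  -- main case: s < t
  have hδ : (0:ℝ) < t - s := by linarith
  have ht0 : (0:ℝ) ≤ t := hs0.trans hst
  have hsT : s ≤ T := hst.trans htT
  -- measurability of the integrands
  have hKtm : Measurable fun r => diagOp (fun i => Real.exp (-(t - r) * μ i)) (g r) :=
    meas_diag _ (fun i => by fun_prop) g hg
  have hKsm : Measurable fun r => diagOp (fun i => Real.exp (-(s - r) * μ i)) (g r) :=
    meas_diag _ (fun i => by fun_prop) g hg
  have hQtm : Measurable fun r =>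
      diagOp (fun i => μ i ^ (θ/2) * Real.exp (-(t - r) * μ i)) (g r) :=
    meas_diag _ (fun i => by fun_prop) g hg
  have hQsm : Measurable fun r =>
      diagOp (fun i => μ i ^ (θ/2) * Real.exp (-(s - r) * μ i)) (g r) :=
    meas_diag _ (fun i => by fun_prop) g hg
  -- basic norm bound for the plain kernels
  have normF : ∀ u r : ℝ, 0 ≤ r → r ≤ u → u ≤ T →
      ‖diagOp (fun i => Real.exp (-(u - r) * μ i)) (g r)‖ ≤ M := by
    intro u r h1 h2 h3
    have hb := diagOp_norm_le (f := fun i => Real.exp (-(u - r) * μ i)) zero_le_one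
      (fun i => by
        rw [abs_of_pos (Real.exp_pos _)]
        apply Real.exp_le_one_iff.2
        have := (hμpos i).le
        nlinarith) (g r)
    rw [one_mul] at hb
    exact hb.trans (hM r ⟨h1, h2.trans h3⟩)
  have hIF : ∀ u a b : ℝ, 0 ≤ a → a ≤ b → b ≤ u → u ≤ T →
      Measurable (fun r => diagOp (fun i => Real.exp (-(u - r) * μ i)) (g r)) →
      IntervalIntegrable (fun r => diagOp (fun i => Real.exp (-(u - r) * μ i)) (g r))
        MeasureTheory.volume a b := by
    intro u a b ha hab hbu huT hm
    exact intervalIntegrable_of_bound hm.aestronglyMeasurable hab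
      (fun r hr => normF u r (ha.trans hr.1) (hr.2.trans hbu) huT)
  have normQ : ∀ u r : ℝ, 0 ≤ r → r ≤ u → u ≤ T →
      ‖diagOp (fun i => μ i ^ (θ/2) * Real.exp (-(u - r) * μ i)) (g r)‖
        ≤ ‖diagOp (fun i => μ i ^ (θ/2))‖ * M := by
    intro u r h1 h2 h3
    rw [← diagOp_comp]
    calc ‖diagOp (fun i => μ i ^ (θ/2))
            (diagOp (fun i => Real.exp (-(u - r) * μ i)) (g r))‖
        ≤ ‖diagOp (fun i => μ i ^ (θ/2))‖ *
            ‖diagOp (fun i => Real.exp (-(u - r) * μ i)) (g r)‖ :=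
          ContinuousLinearMap.le_opNorm _ _
      _ ≤ _ := mul_le_mul_of_nonneg_left (normF u r h1 h2 h3) (norm_nonneg _)
  have hIQ : ∀ u a b : ℝ, 0 ≤ a → a ≤ b → b ≤ u → u ≤ T →
      Measurable (fun r => diagOp (fun i => μ i ^ (θ/2) * Real.exp (-(u - r) * μ i)) (g r)) →
      IntervalIntegrable
        (fun r => diagOp (fun i => μ i ^ (θ/2) * Real.exp (-(u - r) * μ i)) (g r))
        MeasureTheory.volume a b := by
    intro u a b ha hab hbu huT hm
    exact intervalIntegrable_of_bound hm.aestronglyMeasurable hab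
      (fun r hr => normQ u r (ha.trans hr.1) (hr.2.trans hbu) huT)
  -- splitting the first integral
  have hsplit : (∫ r in (0:ℝ)..t, diagOp (fun i => Real.exp (-(t - r) * μ i)) (g r))
      = (∫ r in (0:ℝ)..s, diagOp (fun i => Real.exp (-(t - r) * μ i)) (g r))
        + ∫ r in s..t, diagOp (fun i => Real.exp (-(t - r) * μ i)) (g r) :=
    (intervalIntegral.integral_add_adjacent_intervals
      (hIF t 0 s le_rfl hs0 hst htT hKtm) (hIF t s t hs0 hst le_rfl htT hKtm)).symm
  have rearr : ∀ X Y Z : EuclideanSpace ℝ (Fin n),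
      diagOp (fun i => μ i ^ (θ/2)) (X + Y - Z)
      = diagOp (fun i => μ i ^ (θ/2)) Y +
          (diagOp (fun i => μ i ^ (θ/2)) X - diagOp (fun i => μ i ^ (θ/2)) Z) := by
    intro X Y Z
    rw [map_sub, map_add]
    abel
  have e1 : diagOp (fun i => μ i ^ (θ/2))
        (∫ r in s..t, diagOp (fun i => Real.exp (-(t - r) * μ i)) (g r))
      = ∫ r in s..t, diagOp (fun i => μ i ^ (θ/2) * Real.exp (-(t - r) * μ i)) (g r) := by
    rw [← ContinuousLinearMap.intervalIntegral_comp_comm _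
      (hIF t s t hs0 hst le_rfl htT hKtm)]
    simp only [diagOp_comp]
  have e2 : diagOp (fun i => μ i ^ (θ/2))
        (∫ r in (0:ℝ)..s, diagOp (fun i => Real.exp (-(t - r) * μ i)) (g r))
      = ∫ r in (0:ℝ)..s, diagOp (fun i => μ i ^ (θ/2) * Real.exp (-(t - r) * μ i)) (g r) := by
    rw [← ContinuousLinearMap.intervalIntegral_comp_comm _
      (hIF t 0 s le_rfl hs0 hst htT hKtm)]
    simp only [diagOp_comp]
  have e3 : diagOp (fun i => μ i ^ (θ/2))
        (∫ r in (0:ℝ)..s, diagOp (fun i => Real.exp (-(s - r) * μ i)) (g r))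
      = ∫ r in (0:ℝ)..s, diagOp (fun i => μ i ^ (θ/2) * Real.exp (-(s - r) * μ i)) (g r) := by
    rw [← ContinuousLinearMap.intervalIntegral_comp_comm _
      (hIF s 0 s le_rfl hs0 le_rfl hsT hKsm)]
    simp only [diagOp_comp]
  have e4 : (∫ r in (0:ℝ)..s, diagOp (fun i => μ i ^ (θ/2) * Real.exp (-(t - r) * μ i)) (g r))
        - (∫ r in (0:ℝ)..s, diagOp (fun i => μ i ^ (θ/2) * Real.exp (-(s - r) * μ i)) (g r))
      = ∫ r in (0:ℝ)..s, diagOp (fun i =>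
          μ i ^ (θ/2) * Real.exp (-(t - r) * μ i)
            - μ i ^ (θ/2) * Real.exp (-(s - r) * μ i)) (g r) := by
    rw [← intervalIntegral.integral_sub (hIQ t 0 s le_rfl hs0 hst htT hQtm)
      (hIQ s 0 s le_rfl hs0 le_rfl hsT hQsm)]
    apply intervalIntegral.integral_congr
    intro r _
    exact diagOp_sub _ _ _
  -- integrability of the difference integrand
  have hQ2int : ∀ a b : ℝ, 0 ≤ a → a ≤ b → b ≤ s →
      IntervalIntegrable (fun r => diagOp (fun i =>
          μ i ^ (θ/2) * Real.exp (-(t - r) * μ i)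
            - μ i ^ (θ/2) * Real.exp (-(s - r) * μ i)) (g r)) MeasureTheory.volume a b := by
    intro a b ha hab hbs
    have heq : (fun r => diagOp (fun i =>
          μ i ^ (θ/2) * Real.exp (-(t - r) * μ i)
            - μ i ^ (θ/2) * Real.exp (-(s - r) * μ i)) (g r))
        = fun r => diagOp (fun i => μ i ^ (θ/2) * Real.exp (-(t - r) * μ i)) (g r)
            - diagOp (fun i => μ i ^ (θ/2) * Real.exp (-(s - r) * μ i)) (g r) :=
      funext fun r => (diagOp_sub _ _ _).symm
    rw [heq]
    exact (hIQ t a b ha hab (hbs.trans hst) htT hQtm).sub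
      (hIQ s a b ha hab hbs hsT hQsm)
  -- pointwise kernel identity
  have hkernel : ∀ (r : ℝ) (i : Fin n), 0 ≤ r → r < s →
      |μ i ^ (θ/2) * Real.exp (-(t - r) * μ i) - μ i ^ (θ/2) * Real.exp (-(s - r) * μ i)|
      = μ i ^ (θ/2) * Real.exp (-((s - r) * μ i)) * (1 - Real.exp (-((t - s) * μ i))) := by
    intro r i hr hrs
    have hμi := hμpos i
    have hP : (0:ℝ) ≤ μ i ^ (θ/2) := Real.rpow_nonneg hμi.le _
    have hexp : Real.exp (-(t - r) * μ i) ≤ Real.exp (-(s - r) * μ i) :=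
      Real.exp_le_exp.2 (by nlinarith)
    have hsub : Real.exp (-(s - r) * μ i) - Real.exp (-(t - r) * μ i)
        = Real.exp (-((s - r) * μ i)) * (1 - Real.exp (-((t - s) * μ i))) := by
      rw [mul_sub, mul_one, ← Real.exp_add,
        show -((s - r) * μ i) + -((t - s) * μ i) = -(t - r) * μ i from by ring,
        show -((s - r) * μ i) = -(s - r) * μ i from by ring]
    rw [abs_of_nonpos (by nlinarith)]
    calc -(μ i ^ (θ/2) * Real.exp (-(t - r) * μ i)
            - μ i ^ (θ/2) * Real.exp (-(s - r) * μ i))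
        = μ i ^ (θ/2) * (Real.exp (-(s - r) * μ i) - Real.exp (-(t - r) * μ i)) := by ring
      _ = μ i ^ (θ/2) * (Real.exp (-((s - r) * μ i)) * (1 - Real.exp (-((t - s) * μ i)))) := by
          rw [hsub]
      _ = μ i ^ (θ/2) * Real.exp (-((s - r) * μ i)) * (1 - Real.exp (-((t - s) * μ i))) := by
          ring
  -- pointwise bound A (near the singularity at r = s)
  have hbA : ∀ r : ℝ, 0 ≤ r → r < s →
      ‖diagOp (fun i => μ i ^ (θ/2) * Real.exp (-(t - r) * μ i)
          - μ i ^ (θ/2) * Real.exp (-(s - r) * μ i)) (g r)‖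
        ≤ (s - r) ^ (-(θ/2)) * M := by
    intro r hr hrs
    have hsr : (0:ℝ) < s - r := by linarith
    refine (diagOp_norm_le (Real.rpow_nonneg hsr.le _) (fun i => ?_) (g r)).trans
      (mul_le_mul_of_nonneg_left (hM r ⟨hr, by linarith⟩) (Real.rpow_nonneg hsr.le _))
    rw [hkernel r i hr hrs]
    have h1e : 1 - Real.exp (-((t - s) * μ i)) ≤ 1 := by
      linarith [Real.exp_pos (-((t - s) * μ i))]
    have hd := diag_decay (hμpos i) hsr (γ := θ/2) (C := 1)
      (rpow_mul_exp_neg_le_one (mul_nonneg hsr.le (hμpos i).le) hb0.le hb1.le)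
    rw [one_mul] at hd
    calc μ i ^ (θ/2) * Real.exp (-((s - r) * μ i)) * (1 - Real.exp (-((t - s) * μ i)))
        ≤ μ i ^ (θ/2) * Real.exp (-((s - r) * μ i)) * 1 := by
          apply mul_le_mul_of_nonneg_left h1e
          exact mul_nonneg (Real.rpow_nonneg (hμpos i).le _) (Real.exp_pos _).le
      _ = μ i ^ (θ/2) * Real.exp (-((s - r) * μ i)) := mul_one _
      _ ≤ (s - r) ^ (-(θ/2)) := hd
  -- pointwise bound B (away from the singularity)
  have hbB : ∀ r : ℝ, 0 ≤ r → r ≤ s - (t - s) →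
      ‖diagOp (fun i => μ i ^ (θ/2) * Real.exp (-(t - r) * μ i)
          - μ i ^ (θ/2) * Real.exp (-(s - r) * μ i)) (g r)‖
        ≤ (s - r) ^ (-(1 + θ/2)) * (5 * (t - s)) * M := by
    intro r hr hrs
    have hsr : (0:ℝ) < s - r := by linarith
    have hrs' : r < s := by linarith
    have hC0 : (0:ℝ) ≤ (s - r) ^ (-(1 + θ/2)) * (5 * (t - s)) :=
      mul_nonneg (Real.rpow_nonneg hsr.le _) (mul_nonneg (by norm_num) hδ.le)
    refine (diagOp_norm_le hC0 (fun i => ?_) (g r)).trans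
      (mul_le_mul_of_nonneg_left (hM r ⟨hr, by linarith⟩) hC0)
    rw [hkernel r i hr hrs']
    have h1e : 1 - Real.exp (-((t - s) * μ i)) ≤ (t - s) * μ i := by
      have h := one_sub_exp_le_rpow (mul_nonneg hδ.le (hμpos i).le) (c := 1) zero_le_one le_rfl
      rwa [Real.rpow_one] at h
    have hd := diag_decay (hμpos i) hsr (γ := 1 + θ/2) (C := 5)
      (rpow_mul_exp_neg_le_five (mul_nonneg hsr.le (hμpos i).le) hb0.le hb1.le)
    have hpow : μ i ^ ((1:ℝ) + θ/2) = μ i * μ i ^ (θ/2) := by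
      rw [Real.rpow_add (hμpos i), Real.rpow_one]
    calc μ i ^ (θ/2) * Real.exp (-((s - r) * μ i)) * (1 - Real.exp (-((t - s) * μ i)))
        ≤ μ i ^ (θ/2) * Real.exp (-((s - r) * μ i)) * ((t - s) * μ i) := by
          apply mul_le_mul_of_nonneg_left h1e
          exact mul_nonneg (Real.rpow_nonneg (hμpos i).le _) (Real.exp_pos _).le
      _ = (t - s) * (μ i ^ ((1:ℝ) + θ/2) * Real.exp (-((s - r) * μ i))) := by
          rw [hpow]; ring
      _ ≤ (t - s) * (5 * (s - r) ^ (-(1 + θ/2))) :=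
          mul_le_mul_of_nonneg_left hd hδ.le
      _ = (s - r) ^ (-(1 + θ/2)) * (5 * (t - s)) := by ring
  -- near-piece integral estimate
  have hnear : ∀ a : ℝ, 0 ≤ a → a ≤ s →
      (∫ r in a..s, ‖diagOp (fun i => μ i ^ (θ/2) * Real.exp (-(t - r) * μ i)
          - μ i ^ (θ/2) * Real.exp (-(s - r) * μ i)) (g r)‖)
        ≤ (s - a) ^ (1 - θ/2) / (1 - θ/2) * M := by
    intro a ha has
    calc (∫ r in a..s, ‖diagOp (fun i => μ i ^ (θ/2) * Real.exp (-(t - r) * μ i)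
            - μ i ^ (θ/2) * Real.exp (-(s - r) * μ i)) (g r)‖)
        ≤ ∫ r in a..s, (s - r) ^ (-(θ/2)) * M := by
          apply intervalIntegral.integral_mono_ae_restrict has
            ((hQ2int a s ha has le_rfl).norm) ((II_sub (by linarith)).mul_const M)
          filter_upwards [MeasureTheory.ae_restrict_mem measurableSet_Icc,
            ae_ne_restrict (Set.Icc a s) s] with r hr hrs
          exact hbA r (ha.trans hr.1) (lt_of_le_of_ne hr.2 hrs)
      _ = (s - a) ^ (1 - θ/2) / (1 - θ/2) * M := by
          rw [intervalIntegral.integral_mul_const, J_int (by linarith : (-1:ℝ) < -(θ/2)),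
            sub_self, Real.zero_rpow (by linarith : -(θ/2) + 1 ≠ 0),
            show -(θ/2) + 1 = 1 - θ/2 from by ring]
          ring
  -- norm of I1
  have hI1 : ‖∫ r in s..t, diagOp (fun i => μ i ^ (θ/2) * Real.exp (-(t - r) * μ i)) (g r)‖
      ≤ (t - s) ^ (1 - θ/2) / (1 - θ/2) * M := by
    calc ‖∫ r in s..t, diagOp (fun i => μ i ^ (θ/2) * Real.exp (-(t - r) * μ i)) (g r)‖
        ≤ ∫ r in s..t,
            ‖diagOp (fun i => μ i ^ (θ/2) * Real.exp (-(t - r) * μ i)) (g r)‖ :=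
          intervalIntegral.norm_integral_le_integral_norm hst
      _ ≤ ∫ r in s..t, (t - r) ^ (-(θ/2)) * M := by
          apply intervalIntegral.integral_mono_ae_restrict hst
            ((hIQ t s t hs0 hst le_rfl htT hQtm).norm) ((II_sub (by linarith)).mul_const M)
          filter_upwards [MeasureTheory.ae_restrict_mem measurableSet_Icc,
            ae_ne_restrict (Set.Icc s t) t] with r hr hrt
          have htr : (0:ℝ) < t - r := lt_of_le_of_ne (sub_nonneg.2 hr.2)
            (fun hc => hrt (by linarith))
          have hbound : ∀ i, |μ i ^ (θ/2) * Real.exp (-(t - r) * μ i)|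
              ≤ (t - r) ^ (-(θ/2)) := by
            intro i
            rw [abs_of_nonneg (mul_nonneg (Real.rpow_nonneg (hμpos i).le _)
              (Real.exp_pos _).le)]
            have hd := diag_decay (hμpos i) htr (γ := θ/2) (C := 1)
              (rpow_mul_exp_neg_le_one (mul_nonneg htr.le (hμpos i).le) hb0.le hb1.le)
            rw [one_mul] at hd
            rw [show -(t - r) * μ i = -((t - r) * μ i) from by ring]
            exact hd
          refine (diagOp_norm_le (Real.rpow_nonneg htr.le _) hbound (g r)).trans ?_
          exact mul_le_mul_of_nonneg_left (hM r ⟨hs0.trans hr.1, hr.2.trans htT⟩)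
            (Real.rpow_nonneg htr.le _)
      _ = (t - s) ^ (1 - θ/2) / (1 - θ/2) * M := by
          rw [intervalIntegral.integral_mul_const, J_int (by linarith : (-1:ℝ) < -(θ/2)),
            sub_self, Real.zero_rpow (by linarith : -(θ/2) + 1 ≠ 0),
            show -(θ/2) + 1 = 1 - θ/2 from by ring]
          ring
  -- norm of I2
  have hI2 : ‖∫ r in (0:ℝ)..s, diagOp (fun i => μ i ^ (θ/2) * Real.exp (-(t - r) * μ i)
        - μ i ^ (θ/2) * Real.exp (-(s - r) * μ i)) (g r)‖
      ≤ (t - s) ^ (1 - θ/2) / (1 - θ/2) * M + 5 / (θ/2) * ((t - s) ^ (1 - θ/2) * M) := by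
    have hnn : (0:ℝ) ≤ (t - s) ^ (1 - θ/2) := Real.rpow_nonneg hδ.le _
    have hstep : ‖∫ r in (0:ℝ)..s, diagOp (fun i => μ i ^ (θ/2) * Real.exp (-(t - r) * μ i)
          - μ i ^ (θ/2) * Real.exp (-(s - r) * μ i)) (g r)‖
        ≤ ∫ r in (0:ℝ)..s, ‖diagOp (fun i => μ i ^ (θ/2) * Real.exp (-(t - r) * μ i)
            - μ i ^ (θ/2) * Real.exp (-(s - r) * μ i)) (g r)‖ :=
      intervalIntegral.norm_integral_le_integral_norm hs0
    rcases le_or_gt s (t - s) with hcase | hcase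
    · have h1 := hnear 0 le_rfl hs0
      rw [sub_zero] at h1
      have h2 : s ^ (1 - θ/2) ≤ (t - s) ^ (1 - θ/2) :=
        Real.rpow_le_rpow hs0 hcase h1b.le
      have h3 : s ^ (1 - θ/2) / (1 - θ/2) * M ≤ (t - s) ^ (1 - θ/2) / (1 - θ/2) * M := by
        apply mul_le_mul_of_nonneg_right _ hM0
        exact div_le_div_of_nonneg_right h2 h1b.le
      have h4 : (0:ℝ) ≤ 5 / (θ/2) * ((t - s) ^ (1 - θ/2) * M) :=
        mul_nonneg (div_nonneg (by norm_num) hb0.le) (mul_nonneg hnn hM0)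
      linarith [hstep.trans (h1.trans h3)]
    · -- split the integral at s - (t - s)
      have h0sd : (0:ℝ) ≤ s - (t - s) := by linarith
      have hσ : (0:ℝ) < s := by linarith
      have hsplit2 : (∫ r in (0:ℝ)..s, ‖diagOp (fun i =>
            μ i ^ (θ/2) * Real.exp (-(t - r) * μ i)
              - μ i ^ (θ/2) * Real.exp (-(s - r) * μ i)) (g r)‖)
          = (∫ r in (0:ℝ)..(s - (t - s)), ‖diagOp (fun i =>
              μ i ^ (θ/2) * Real.exp (-(t - r) * μ i)
                - μ i ^ (θ/2) * Real.exp (-(s - r) * μ i)) (g r)‖)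
            + ∫ r in (s - (t - s))..s, ‖diagOp (fun i =>
              μ i ^ (θ/2) * Real.exp (-(t - r) * μ i)
                - μ i ^ (θ/2) * Real.exp (-(s - r) * μ i)) (g r)‖ :=
        (intervalIntegral.integral_add_adjacent_intervals
          ((hQ2int 0 (s - (t - s)) le_rfl h0sd (by linarith)).norm)
          ((hQ2int (s - (t - s)) s h0sd (by linarith) le_rfl).norm)).symm
      have hfar : (∫ r in (0:ℝ)..(s - (t - s)), ‖diagOp (fun i =>
            μ i ^ (θ/2) * Real.exp (-(t - r) * μ i)
              - μ i ^ (θ/2) * Real.exp (-(s - r) * μ i)) (g r)‖)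
          ≤ 5 / (θ/2) * ((t - s) ^ (1 - θ/2) * M) := by
        have hnotmem : (0:ℝ) ∉ Set.uIcc (s - (0:ℝ)) (s - (s - (t - s))) := by
          rw [sub_zero, show s - (s - (t - s)) = t - s from by ring]
          exact Set.notMem_uIcc_of_lt hσ hδ
        have hmono : (∫ r in (0:ℝ)..(s - (t - s)), ‖diagOp (fun i =>
              μ i ^ (θ/2) * Real.exp (-(t - r) * μ i)
                - μ i ^ (θ/2) * Real.exp (-(s - r) * μ i)) (g r)‖)
            ≤ ∫ r in (0:ℝ)..(s - (t - s)),
                (s - r) ^ (-(1 + θ/2)) * (5 * (t - s)) * M := by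
          apply intervalIntegral.integral_mono_on h0sd
            ((hQ2int 0 (s - (t - s)) le_rfl h0sd (by linarith)).norm)
            (((II_sub2 hnotmem).mul_const (5 * (t - s))).mul_const M)
          intro r hr
          exact hbB r hr.1 hr.2
        have hval : (∫ r in (0:ℝ)..(s - (t - s)),
              (s - r) ^ (-(1 + θ/2)) * (5 * (t - s)) * M)
            = ((t - s) ^ (-(θ/2)) - s ^ (-(θ/2))) / (θ/2) * (5 * (t - s)) * M := by
          have hne : -(1 + θ/2) ≠ -1 := by intro hc; linarith [neg_injective hc]
          have hnotmem2 : (0:ℝ) ∉ Set.uIcc (s - (s - (t - s))) (s - (0:ℝ)) := by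
            rw [sub_zero, show s - (s - (t - s)) = t - s from by ring]
            exact Set.notMem_uIcc_of_lt hδ hσ
          rw [intervalIntegral.integral_mul_const, intervalIntegral.integral_mul_const,
            J_int2 hne hnotmem2, sub_zero,
            show s - (s - (t - s)) = t - s from by ring,
            show -(1 + θ/2) + 1 = -(θ/2) from by ring]
          ring
        have hfv : ((t - s) ^ (-(θ/2)) - s ^ (-(θ/2))) / (θ/2) * (5 * (t - s)) * M
            ≤ 5 / (θ/2) * ((t - s) ^ (1 - θ/2) * M) := by
          have hδpow : (t - s) ^ (1 - θ/2) = (t - s) * (t - s) ^ (-(θ/2)) := by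
            rw [show 1 - θ/2 = 1 + (-(θ/2)) from by ring, Real.rpow_add hδ, Real.rpow_one]
          have hs1 : (0:ℝ) ≤ s ^ (-(θ/2)) := Real.rpow_nonneg hσ.le _
          have h5 : ((t - s) ^ (-(θ/2)) - s ^ (-(θ/2))) / (θ/2) * (5 * (t - s)) * M
              ≤ (t - s) ^ (-(θ/2)) / (θ/2) * (5 * (t - s)) * M := by
            apply mul_le_mul_of_nonneg_right _ hM0
            apply mul_le_mul_of_nonneg_right _ (mul_nonneg (by norm_num) hδ.le)
            exact div_le_div_of_nonneg_right (by linarith) hb0.le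
          have h6 : (t - s) ^ (-(θ/2)) / (θ/2) * (5 * (t - s)) * M
              = 5 / (θ/2) * ((t - s) ^ (1 - θ/2) * M) := by
            rw [hδpow]; ring
          linarith
        linarith [hmono.trans_eq hval]
      have hnear2 := hnear (s - (t - s)) h0sd (by linarith)
      rw [show s - (s - (t - s)) = t - s from by ring] at hnear2
      linarith [hstep.trans_eq hsplit2]
  -- put everything together
  rw [hsplit, rearr, e1, e2, e3, e4]
  have htotal := (norm_add_le _ _).trans (add_le_add hI1 hI2)
  have hfinal : (t - s) ^ (1 - θ/2) / (1 - θ/2) * M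
      + ((t - s) ^ (1 - θ/2) / (1 - θ/2) * M + 5 / (θ/2) * ((t - s) ^ (1 - θ/2) * M))
      = (2 / (1 - θ/2) + 5 / (θ/2)) * (t - s) ^ (1 - θ/2) * M := by
    ring
  linarith [htotal]
end
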